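/- Every divisor of degree g(G) on a finite connected loopless multigraph G is equivalent to an effective divisor, where g(G) = |E(G)| − |V(G)| + 1. -/

import Mathlib

open Finset

/-- A finite loopless multigraph on a vertex type `V`, given by a symmetric
edge-multiplicity function with zero diagonal. -/
structure Multigraph (V : Type) [Fintype V] [DecidableEq V] where
  m : V → V → ℕ
  symm : ∀ u v, m u v = m v u
  loopless : ∀ v, m v v = 0

namespace Multigraph

variable {V : Type} [Fintype V] [DecidableEq V] (G : Multigraph V)

/-- The underlying simple graph: adjacent iff joined by at least one edge. -/
def toSimpleGraph : SimpleGraph V where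
  Adj u v := 0 < G.m u v
  symm := by
    refine ⟨fun u v h => ?_⟩
    rw [G.symm v u]
    exact h
  loopless := by
    refine ⟨fun v h => ?_⟩
    rw [G.loopless v] at h
    exact lt_irrefl 0 h

/-- A multigraph is connected if its underlying simple graph is. -/
def Connected : Prop := G.toSimpleGraph.Connected

/-- The valence of a vertex: the number of edges incident to it. -/
def val (v : V) : ℕ := ∑ w, G.m v w

end Multigraph

/-- The degree of a divisor: the sum of its values. -/
def Divisor.deg {V : Type} [Fintype V] (D : V → ℤ) : ℤ := ∑ v, D v

/-- A divisor is effective if all its values are nonnegative. -/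
def Divisor.Effective {V : Type} (D : V → ℤ) : Prop := ∀ v, 0 ≤ D v

namespace Multigraph

variable {V : Type} [Fintype V] [DecidableEq V] (G : Multigraph V)

/-- The result of firing the vertex `v`: `v` loses its valence many chips, and
every other vertex `w` gains `m v w` chips. -/
def fire (v : V) (D : V → ℤ) : V → ℤ :=
  fun w => D w + (G.m v w : ℤ) - if w = v then (G.val v : ℤ) else 0

/-- Two divisors are equivalent if one is obtained from the other by a finite
sequence of firing moves. -/
def Equivalent (D D' : V → ℤ) : Prop :=
  Relation.ReflTransGen (fun A B => ∃ v, B = G.fire v A) D D'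

/-- A divisor `D` wins the Gonality Game if for every vertex `q`, the divisor
`D - 1_q` is equivalent to an effective divisor. -/
def Winning (D : V → ℤ) : Prop :=
  ∀ q : V, ∃ D' : V → ℤ,
    G.Equivalent (fun w => D w - if w = q then 1 else 0) D' ∧ Divisor.Effective D'

/-- The gonality of `G`: the minimum degree of an effective divisor that wins
the Gonality Game. -/
noncomputable def gonality : ℕ :=
  sInf {n : ℕ | ∃ D : V → ℤ, Divisor.Effective D ∧ G.Winning D ∧ Divisor.deg D = (n : ℤ)}

end Multigraph

/-- The multigraph associated to a simple graph: one edge for each adjacency. -/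
def Multigraph.ofSimpleGraph {V : Type} [Fintype V] [DecidableEq V]
    (G : SimpleGraph V) [DecidableRel G.Adj] : Multigraph V where
  m u v := if G.Adj u v then 1 else 0
  symm := by
    intro u v
    by_cases h : G.Adj u v
    · simp [h, h.symm]
    · have h' : ¬ G.Adj v u := fun hvu => h hvu.symm
      simp [h, h']
  loopless := by intro v; simp

namespace Multigraph

variable {V : Type} [Fintype V] [DecidableEq V] (G : Multigraph V)

/-- The rank of a divisor `D`: the largest integer `r` such that for every
effective divisor `E` of degree `r`, the divisor `D - E` is equivalent to an
effective divisor.  (Every `r ≤ -1` satisfies the condition vacuously, so the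
rank is `-1` exactly when `D` itself is not equivalent to an effective
divisor.) -/
noncomputable def rank (D : V → ℤ) : ℤ :=
  sSup {r : ℤ | ∀ E : V → ℤ, Divisor.Effective E → Divisor.deg E = r →
    ∃ F : V → ℤ, G.Equivalent (fun v => D v - E v) F ∧ Divisor.Effective F}

/-- The number of edges of `G`. -/
def numEdges : ℕ := (∑ u : V, ∑ v : V, G.m u v) / 2

/-- The genus (first Betti number) of `G`: `|E(G)| - |V(G)| + 1`. -/
def genus : ℤ := (G.numEdges : ℤ) - (Fintype.card V : ℤ) + 1

/-- The canonical divisor of `G`: `val(v) - 2` chips on each vertex `v`. -/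
def canonical : V → ℤ := fun v => (G.val v : ℤ) - 2

end Multigraph

/-!
Fix a vertex `q`. For `N` at least every distance to `q` and `C` large, the weight
`w v = C ^ N - C ^ (N - dist q v)` is nonnegative, vanishes at `q`, and has Laplacian at least `1`
away from `q`. Firing along a large multiple of `M - w` (with `M ≥ w`) makes any divisor
nonnegative away from `q`, and `∑ v, D v * w v` is then a
nonnegative potential that drops whenever a nonempty set of vertices avoiding `q` fires. While
`D q < 0`, Dhar's burning argument produces such a set that fires legally: otherwise removing
unstable vertices one at a time bounds `∑_{v ≠ q} (D v + 1)` by the number of edges, which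
forces `deg D ≤ g - 1`.
-/

namespace Multigraph

variable {V : Type} [Fintype V] [DecidableEq V] (G : Multigraph V)

def laplacian (f : V → ℤ) (x : V) : ℤ := ∑ y, (G.m x y : ℤ) * (f x - f y)

lemma laplacian_add (f g : V → ℤ) : G.laplacian (f + g) = G.laplacian f + G.laplacian g := by
  funext x
  simp only [laplacian, Pi.add_apply, ← sum_add_distrib]
  exact sum_congr rfl fun y _ => by ring

lemma sum_laplacian_mul_comm (f g : V → ℤ) :
    ∑ x, G.laplacian f x * g x = ∑ x, f x * G.laplacian g x := by
  have hswap : ∑ x, ∑ y, (G.m x y : ℤ) * f y * g x = ∑ x, ∑ y, f x * ((G.m x y : ℤ) * g y) := by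
    rw [sum_comm]
    exact sum_congr rfl fun x _ => sum_congr rfl fun y _ => by rw [G.symm]; ring
  simp only [laplacian, sum_mul, mul_sum, mul_sub, sub_mul, sum_sub_distrib,
    hswap]
  congr 1
  exact sum_congr rfl fun x _ => sum_congr rfl fun y _ => by ring

lemma deg_laplacian (f : V → ℤ) : Divisor.deg (G.laplacian f) = 0 := by
  simpa [Divisor.deg, laplacian] using G.sum_laplacian_mul_comm f 1

lemma fire_eq_sub_laplacian (v : V) (D : V → ℤ) :
    G.fire v D = D - G.laplacian (Pi.single v 1) := by
  funext x
  by_cases hx : x = v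
  · subst hx
    simp [fire, laplacian, val, Pi.single_apply, mul_sub, G.loopless]
  · simp [fire, laplacian, hx, Pi.single_apply, G.symm x v]

lemma Equivalent.refl (D : V → ℤ) : G.Equivalent D D := Relation.ReflTransGen.refl

variable {G} in
lemma Equivalent.trans {D₁ D₂ D₃ : V → ℤ} (h₁₂ : G.Equivalent D₁ D₂)
    (h₂₃ : G.Equivalent D₂ D₃) : G.Equivalent D₁ D₃ :=
  Relation.ReflTransGen.trans h₁₂ h₂₃

lemma equivalent_sub_laplacian (D : V → ℤ) {f : V → ℤ} (hf : 0 ≤ f) :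
    G.Equivalent D (D - G.laplacian f) := by
  let Firable : (V → ℤ) → Prop := fun f => ∀ D, G.Equivalent D (D - G.laplacian f)
  have hzero : Firable 0 := fun D => by
    rw [show G.laplacian 0 = 0 from funext fun x => by simp [laplacian], sub_zero]
    exact Equivalent.refl G D
  have hadd : ∀ f g, Firable f → Firable g → Firable (f + g) := fun f g hf hg D => by
    simpa [laplacian_add, sub_add_eq_sub_sub] using (hf D).trans (hg (D - G.laplacian f))
  have hsingle : ∀ v (n : ℕ), Firable (Pi.single v (n : ℤ)) := by
    intro v n
    induction n with
    | zero => simpa using hzero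
    | succ n ih =>
      rw [Nat.cast_succ, Pi.single_add]
      exact hadd _ _ ih fun D => .single ⟨v, (G.fire_eq_sub_laplacian v D).symm⟩
  lift f to V → ℕ using hf
  rw [← univ_sum_single (fun v => (f v : ℤ))]
  exact sum_induction _ Firable hadd hzero (fun v _ => hsingle v (f v)) D

variable {G} in
lemma Equivalent.deg_eq {D D' : V → ℤ} (h : G.Equivalent D D') :
    Divisor.deg D' = Divisor.deg D := by
  induction h with
  | refl => rfl
  | tail _ hstep ih =>
    obtain ⟨v, rfl⟩ := hstep
    rw [fire_eq_sub_laplacian, ← ih, Divisor.deg, Divisor.deg]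
    simp only [Pi.sub_apply, sum_sub_distrib]
    rw [show ∑ x, G.laplacian _ x = 0 from G.deg_laplacian _, sub_zero]

def edgesOut (A : Finset V) (x : V) : ℕ := ∑ y ∈ Aᶜ, G.m x y

def LegalFiring (D : V → ℤ) (A : Finset V) : Prop := ∀ x ∈ A, (G.edgesOut A x : ℤ) ≤ D x

lemma laplacian_indicator_of_mem {A : Finset V} {x : V} (hx : x ∈ A) :
    G.laplacian (fun v => if v ∈ A then 1 else 0) x = G.edgesOut A x := by
  simp only [laplacian, edgesOut, if_pos hx, Nat.cast_sum]
  rw [← sum_add_sum_compl A, sum_eq_zero fun y hy => by simp [hy], zero_add]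
  exact sum_congr rfl fun y hy => by simp [mem_compl.mp hy]

lemma laplacian_indicator_nonpos_of_not_mem {A : Finset V} {x : V} (hx : x ∉ A) :
    G.laplacian (fun v => if v ∈ A then 1 else 0) x ≤ 0 := by
  simp only [laplacian, if_neg hx]
  exact sum_nonpos fun y _ => by split_ifs <;> simp

variable {G} in
lemma LegalFiring.nonneg_sub_laplacian {D : V → ℤ} {A : Finset V} (h : G.LegalFiring D A)
    {x : V} (hx : x ∉ A → 0 ≤ D x) :
    0 ≤ D x - G.laplacian (fun v => if v ∈ A then 1 else 0) x := by
  by_cases hxA : x ∈ A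
  · rw [G.laplacian_indicator_of_mem hxA]
    linarith [h x hxA]
  · linarith [G.laplacian_indicator_nonpos_of_not_mem hxA, hx hxA]

lemma sum_val_add_edgesOut_eq_erase {A : Finset V} {x : V} (hx : x ∈ A) :
    ∑ y ∈ A, (G.val y + G.edgesOut A y)
      = ∑ y ∈ A.erase x, (G.val y + G.edgesOut (A.erase x) y) + 2 * G.edgesOut A x := by
  have hxc : x ∉ Aᶜ := by simpa using hx
  have hval : G.val x = ∑ y ∈ A.erase x, G.m y x + G.edgesOut A x := by
    rw [val, edgesOut, ← sum_add_sum_compl A, ← add_sum_erase A _ hx, G.loopless,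
      zero_add]
    simp only [G.symm x]
  simp only [edgesOut, compl_erase, sum_insert hxc, sum_add_distrib] at hval ⊢
  rw [← add_sum_erase A _ hx, ← add_sum_erase A _ hx]
  omega

-- The right-hand side counts every edge with an endpoint in `A` twice.
lemma two_mul_sum_add_one_le (D : V → ℤ) (A : Finset V)
    (hA : ∀ B ⊆ A, B.Nonempty → ∃ x ∈ B, D x < G.edgesOut B x) :
    2 * ∑ x ∈ A, (D x + 1) ≤ ((∑ x ∈ A, (G.val x + G.edgesOut A x) : ℕ) : ℤ) := by
  induction A using strongInduction with
  | H A ih =>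
  rcases A.eq_empty_or_nonempty with rfl | hne
  · simp
  obtain ⟨x, hxA, hx⟩ := hA A subset_rfl hne
  have hrest := ih (A.erase x) (erase_ssubset hxA)
    fun B hB => hA B (hB.trans (erase_subset x A))
  rw [G.sum_val_add_edgesOut_eq_erase hxA, ← add_sum_erase A _ hxA]
  push_cast at hrest ⊢
  linarith

lemma sum_val_add_edgesOut_erase_univ (q : V) :
    ∑ x ∈ univ.erase q, (G.val x + G.edgesOut (univ.erase q) x)
      = ∑ x, G.val x := by
  have h := G.sum_val_add_edgesOut_eq_erase (mem_univ q)
  simp only [edgesOut, compl_univ, sum_empty, add_zero, mul_zero] at h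
  exact h.symm

lemma exists_legalFiring {D : V → ℤ} {q : V} (hq : D q < 0)
    (hD : G.genus ≤ Divisor.deg D) :
    ∃ A : Finset V, A.Nonempty ∧ q ∉ A ∧ G.LegalFiring D A := by
  by_contra! hnone
  have hcount := G.two_mul_sum_add_one_le D (univ.erase q) fun B hB hBne => by
    have := hnone B hBne fun hqB => by simpa using hB hqB
    simpa [LegalFiring] using this
  rw [G.sum_val_add_edgesOut_erase_univ, sum_add_distrib] at hcount
  have hdeg : Divisor.deg D = D q + ∑ x ∈ univ.erase q, D x :=
    (add_sum_erase _ _ (mem_univ q)).symm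
  have hcard := card_erase_add_one (mem_univ q)
  rw [card_univ] at hcard
  simp only [sum_const, nsmul_eq_mul, mul_one] at hcount
  simp only [genus, numEdges, val] at hD hcount
  omega

lemma one_le_laplacian_sub_pow {C : ℕ} {e : V → ℕ} (M : ℤ) {x u : V} (hC : G.val x + 2 ≤ C)
    (hnear : ∀ y, 0 < G.m x y → e x ≤ e y + 1) (hu : 0 < G.m x u) (hxu : e x + 1 ≤ e u) :
    1 ≤ G.laplacian (fun v => M - (C : ℤ) ^ e v) x := by
  set b : ℤ := (C : ℤ) ^ e x
  have hC1 : (1 : ℤ) ≤ C := by omega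
  have hb : 1 ≤ b := one_le_pow₀ hC1
  set g : V → ℤ := fun y => G.m x y * ((C : ℤ) ^ (e y + 1) - b)
  have hg : ∀ y, 0 ≤ g y := fun y => by
    rcases Nat.eq_zero_or_pos (G.m x y) with h | h
    · simp [g, h]
    · exact mul_nonneg (by positivity) (sub_nonneg.mpr (pow_le_pow_right₀ hC1 (hnear y h)))
  have hgu : (C : ℤ) ^ 2 * b - b ≤ g u := by
    have hpow : (C : ℤ) ^ 2 * b ≤ (C : ℤ) ^ (e u + 1) := by
      rw [← pow_add]; exact pow_le_pow_right₀ hC1 (by omega)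
    have hm : (1 : ℤ) ≤ G.m x u := by exact_mod_cast hu
    have hgap : 0 ≤ (C : ℤ) ^ (e u + 1) - b := sub_nonneg.mpr (pow_le_pow_right₀ hC1 (by omega))
    calc (C : ℤ) ^ 2 * b - b ≤ (C : ℤ) ^ (e u + 1) - b := by linarith
      _ ≤ g u := le_mul_of_one_le_left hgap hm
  have hsum : C * G.laplacian (fun v => M - (C : ℤ) ^ e v) x
      = ∑ y, g y - G.val x * (C - 1) * b := by
    simp only [laplacian, g, val, Nat.cast_sum, mul_sum, sum_mul,
      ← sum_sub_distrib]
    exact sum_congr rfl fun y _ => by ring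
  have hlow : (C : ℤ) ^ 2 * b - b ≤ ∑ y, g y :=
    hgu.trans (single_le_sum (fun y _ => hg y) (mem_univ u))
  have hval : (G.val x : ℤ) + 2 ≤ C := by exact_mod_cast hC
  -- The edges to `u` alone outweigh the loss along all other edges.
  have hpos : 0 < (C : ℤ) * G.laplacian (fun v => M - (C : ℤ) ^ e v) x := by
    rw [hsum]
    nlinarith [mul_pos (mul_pos (by linarith : (0 : ℤ) < C - 1) (by linarith : (0 : ℤ) < b))
      (by linarith : (0 : ℤ) < C + 1 - G.val x)]
  exact pos_of_mul_pos_right hpos (by linarith)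

lemma exists_adj_dist_lt (hG : G.Connected) {q x : V} (hx : x ≠ q) :
    ∃ u, 0 < G.m x u ∧ G.toSimpleGraph.dist q u + 1 ≤ G.toSimpleGraph.dist q x := by
  obtain ⟨p, hp⟩ := SimpleGraph.Connected.exists_walk_length_eq_dist hG x q
  cases p with
  | nil => exact absurd rfl hx
  | cons hadj p' =>
    refine ⟨_, hadj, ?_⟩
    rw [SimpleGraph.dist_comm, SimpleGraph.dist_comm (u := q), ← hp,
      SimpleGraph.Walk.length_cons]
    exact Nat.add_le_add_right (SimpleGraph.dist_le p') 1

lemma exists_nonneg_one_le_laplacian_off (hG : G.Connected) (q : V) :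
    ∃ w : V → ℤ, w q = 0 ∧ 0 ≤ w ∧ ∀ x ≠ q, 1 ≤ G.laplacian w x := by
  let N := univ.sup fun v => G.toSimpleGraph.dist q v
  let C := ∑ v, G.val v + 2
  have hdN : ∀ v, G.toSimpleGraph.dist q v ≤ N := fun v =>
    le_sup (f := fun v => G.toSimpleGraph.dist q v) (mem_univ v)
  have hC : (1 : ℤ) ≤ C := by exact_mod_cast Nat.le_add_left 1 (∑ v, G.val v + 1)
  refine ⟨fun v => (C : ℤ) ^ N - (C : ℤ) ^ (N - G.toSimpleGraph.dist q v), by simp,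
    fun v => sub_nonneg.mpr (pow_le_pow_right₀ hC (Nat.sub_le _ _)),
    fun x hx => ?_⟩
  obtain ⟨u, hu, hux⟩ := G.exists_adj_dist_lt hG hx
  refine G.one_le_laplacian_sub_pow _ ?_ (fun y hy => ?_) hu (by grind)
  · have := single_le_sum (fun v _ => Nat.zero_le (G.val v)) (mem_univ x)
    omega
  · have hadj : G.toSimpleGraph.Adj x y := hy
    have := hadj.diff_dist_adj (u := q)
    have := hdN x
    have := hdN y
    omega

lemma exists_equivalent_nonneg_off {q : V} {w : V → ℤ} (hw : 0 ≤ w)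
    (hLw : ∀ x ≠ q, 1 ≤ G.laplacian w x) (D : V → ℤ) :
    ∃ E, G.Equivalent D E ∧ ∀ v ≠ q, 0 ≤ E v := by
  set k := ∑ v, |D v|
  set M := ∑ v, w v
  have hk : 0 ≤ k := sum_nonneg fun v _ => abs_nonneg (D v)
  have hscript : 0 ≤ fun v => k * (M - w v) := fun v =>
    mul_nonneg hk (sub_nonneg.mpr (single_le_sum (fun u _ => hw u) (mem_univ v)))
  refine ⟨_, G.equivalent_sub_laplacian D hscript, fun x hx => ?_⟩
  have hL : G.laplacian (fun v => k * (M - w v)) x = -(k * G.laplacian w x) := by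
    simp only [laplacian, mul_sum, ← sum_neg_distrib]
    exact sum_congr rfl fun y _ => by ring
  have hDx : -D x ≤ k :=
    (neg_le_abs _).trans (single_le_sum (fun v _ => abs_nonneg (D v)) (mem_univ x))
  rw [Pi.sub_apply, hL]
  nlinarith [mul_nonneg hk (sub_nonneg.mpr (hLw x hx))]

lemma exists_equivalent_sum_mul_lt {q : V} {w : V → ℤ} (hLw : ∀ x ≠ q, 1 ≤ G.laplacian w x)
    {D : V → ℤ} (hD : G.genus ≤ Divisor.deg D) (hoff : ∀ v ≠ q, 0 ≤ D v) (hq : D q < 0) :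
    ∃ E, G.Equivalent D E ∧ (∀ v ≠ q, 0 ≤ E v) ∧ ∑ v, E v * w v < ∑ v, D v * w v := by
  obtain ⟨A, hAne, hqA, hlegal⟩ := G.exists_legalFiring hq hD
  refine ⟨_, G.equivalent_sub_laplacian D (f := fun v => if v ∈ A then 1 else 0)
    (fun v => by dsimp; split_ifs <;> norm_num),
    fun v hv => hlegal.nonneg_sub_laplacian fun _ => hoff v hv, ?_⟩
  have hpair : ∑ v, (D - G.laplacian (fun v => if v ∈ A then 1 else 0)) v * w v
      = ∑ v, D v * w v - ∑ x ∈ A, G.laplacian w x := by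
    simp only [Pi.sub_apply, sub_mul, sum_sub_distrib, sum_laplacian_mul_comm, ite_mul,
      one_mul, zero_mul, sum_ite_mem, univ_inter]
  have hdrop : 0 < ∑ x ∈ A, G.laplacian w x := sum_pos
    (fun x hx => by linarith [hLw x (ne_of_mem_of_not_mem hx hqA)]) hAne
  linarith

lemma exists_equivalent_effective {q : V} {w : V → ℤ} (hwq : w q = 0) (hw : 0 ≤ w)
    (hLw : ∀ x ≠ q, 1 ≤ G.laplacian w x) {D : V → ℤ} (hD : G.genus ≤ Divisor.deg D)
    (hoff : ∀ v ≠ q, 0 ≤ D v) : ∃ F, G.Equivalent D F ∧ Divisor.Effective F := by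
  suffices h : ∀ n : ℕ, ∀ D : V → ℤ, G.genus ≤ Divisor.deg D → (∀ v ≠ q, 0 ≤ D v) →
      ∑ v, D v * w v < n → ∃ F, G.Equivalent D F ∧ Divisor.Effective F from
    h (∑ v, D v * w v).toNat.succ D hD hoff (by omega)
  intro n
  induction n with
  | zero =>
    intro D _ hoff hn
    have : 0 ≤ ∑ v, D v * w v := sum_nonneg fun v _ => by
      by_cases hv : v = q
      · simp [hv, hwq]
      · exact mul_nonneg (hoff v hv) (hw v)
    omega
  | succ n ih =>
    intro D hD hoff hn
    by_cases hq : 0 ≤ D q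
    · exact ⟨D, .refl G D, fun v => if hv : v = q then hv ▸ hq else hoff v hv⟩
    obtain ⟨E, hDE, hoffE, hlt⟩ := G.exists_equivalent_sum_mul_lt hLw hD hoff (not_le.mp hq)
    obtain ⟨F, hEF, hF⟩ := ih E (hDE.deg_eq ▸ hD) hoffE (by omega)
    exact ⟨F, hDE.trans hEF, hF⟩

end Multigraph

/-- Every divisor of degree `g(G)` on a finite connected loopless multigraph
`G` is equivalent to an effective divisor, where `g(G) = |E(G)| - |V(G)| + 1`. -/
theorem degree_genus_equivalent_effective {V : Type} [Fintype V] [DecidableEq V]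
    (G : Multigraph V) (hG : G.Connected) (D : V → ℤ)
    (hD : Divisor.deg D = G.genus) :
    ∃ F : V → ℤ, G.Equivalent D F ∧ Divisor.Effective F := by
  obtain ⟨q⟩ : Nonempty V := SimpleGraph.Connected.nonempty hG
  obtain ⟨w, hwq, hw, hLw⟩ := G.exists_nonneg_one_le_laplacian_off hG q
  obtain ⟨E, hDE, hE⟩ := G.exists_equivalent_nonneg_off hw hLw D
  obtain ⟨F, hEF, hF⟩ := G.exists_equivalent_effective hwq hw hLw (hDE.deg_eq ▸ hD.ge) hE
  exact ⟨F, hDE.trans hEF, hF⟩
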